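/- For all θ, φ₀, φ₁ ∈ [0, π/2] there exists φ ∈ [0, π/2] such that cos(θ/2)·cos φ₀ + sin(θ/2)·cos φ₁ = √2·cos φ and cos(θ/2) + sin(θ/2) + cos(θ/2)·sin φ₁ + sin(θ/2)·sin φ₀ ≤ √2 + √2·sin φ. -/

import Mathlib

open Real Set

/-!
With `c = cos (θ/2)`, `s = sin (θ/2)`, put `A = c cos φ₀ + s cos φ₁` and
`B = c sin φ₁ + s sin φ₀`. Cauchy–Schwarz applied to each of `A` and `B` gives `A² + B² ≤ 2`,
and `A ≥ 0`. So the angle `φ ∈ [0, π/2]` with `A = √2 cos φ` satisfies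
`B ≤ √(2 - A²) = √2 sin φ`, and `c + s ≤ √2` closes the inequality.
-/

lemma mul_add_mul_sq_le_sq_add_sq_mul_sq_add_sq (a b x y : ℝ) :
    (a * x + b * y) ^ 2 ≤ (a ^ 2 + b ^ 2) * (x ^ 2 + y ^ 2) :=
  calc (a * x + b * y) ^ 2 ≤ (a * x + b * y) ^ 2 + (a * y - b * x) ^ 2 :=
        le_add_of_nonneg_right (sq_nonneg _)
    _ = (a ^ 2 + b ^ 2) * (x ^ 2 + y ^ 2) := by ring

lemma add_le_sqrt_two_mul_sq_add_sq (a b : ℝ) : a + b ≤ √(2 * (a ^ 2 + b ^ 2)) :=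
  (le_abs_self _).trans (abs_le_sqrt add_sq_le)

lemma exists_mem_Icc_eq_mul_cos_and_le_mul_sin {r a b : ℝ} (hr : 0 < r) (ha : 0 ≤ a)
    (hab : a ^ 2 + b ^ 2 ≤ r ^ 2) :
    ∃ φ ∈ Icc 0 (π / 2), a = r * cos φ ∧ b ≤ r * sin φ := by
  have har : a ≤ r := (pow_le_pow_iff_left₀ ha hr.le two_ne_zero).1 (by nlinarith [sq_nonneg b])
  refine ⟨arccos (a / r), ⟨arccos_nonneg _, arccos_le_pi_div_two.2 (by positivity)⟩, ?_, ?_⟩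
  · rw [cos_arccos (by linarith [div_nonneg ha hr.le]) ((div_le_one hr).2 har)]
    field_simp
  · have hsin : r * sin (arccos (a / r)) = √(r ^ 2 - a ^ 2) := by
      rw [sin_arccos, ← sqrt_sq hr.le, ← sqrt_mul (sq_nonneg r), sqrt_sq hr.le]
      congr 1
      field_simp
    rw [hsin]
    exact (le_abs_self b).trans (abs_le_sqrt (by linarith))

theorem symmetrisation_lemma
    (θ φ₀ φ₁ : ℝ)
    (hθ : θ ∈ Set.Icc 0 (π / 2)) (hφ₀ : φ₀ ∈ Set.Icc 0 (π / 2))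
    (hφ₁ : φ₁ ∈ Set.Icc 0 (π / 2)) :
    ∃ φ ∈ Set.Icc 0 (π / 2),
      cos (θ / 2) * cos φ₀ + sin (θ / 2) * cos φ₁ = Real.sqrt 2 * cos φ ∧
      cos (θ / 2) + sin (θ / 2) + cos (θ / 2) * sin φ₁ + sin (θ / 2) * sin φ₀ ≤
        Real.sqrt 2 + Real.sqrt 2 * sin φ := by
  set c := cos (θ / 2)
  set s := sin (θ / 2)
  have hpi := pi_pos
  have hc : 0 ≤ c := cos_nonneg_of_mem_Icc ⟨by linarith [hθ.1], by linarith [hθ.2]⟩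
  have hs : 0 ≤ s := sin_nonneg_of_nonneg_of_le_pi (by linarith [hθ.1]) (by linarith [hθ.2])
  have hcs : c ^ 2 + s ^ 2 = 1 := cos_sq_add_sin_sq _
  have hcos₀ : 0 ≤ cos φ₀ := cos_nonneg_of_mem_Icc ⟨by linarith [hφ₀.1], hφ₀.2⟩
  have hcos₁ : 0 ≤ cos φ₁ := cos_nonneg_of_mem_Icc ⟨by linarith [hφ₁.1], hφ₁.2⟩
  have hnorm : (c * cos φ₀ + s * cos φ₁) ^ 2 + (c * sin φ₁ + s * sin φ₀) ^ 2 ≤ √2 ^ 2 :=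
    calc _ ≤ (c ^ 2 + s ^ 2) * (cos φ₀ ^ 2 + cos φ₁ ^ 2)
            + (c ^ 2 + s ^ 2) * (sin φ₁ ^ 2 + sin φ₀ ^ 2) :=
          add_le_add (mul_add_mul_sq_le_sq_add_sq_mul_sq_add_sq ..)
            (mul_add_mul_sq_le_sq_add_sq_mul_sq_add_sq ..)
      _ = √2 ^ 2 := by
          rw [hcs, sq_sqrt zero_le_two]
          linarith [sin_sq_add_cos_sq φ₀, sin_sq_add_cos_sq φ₁]
  obtain ⟨φ, hφ, hA, hB⟩ :=
    exists_mem_Icc_eq_mul_cos_and_le_mul_sin (by positivity) (by positivity) hnorm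
  have hc_add_s : c + s ≤ √2 := by simpa [hcs] using add_le_sqrt_two_mul_sq_add_sq c s
  exact ⟨φ, hφ, hA, by linarith⟩
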